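/- Let A be a category admitting equalisers, λ : FG → GF an entwining from a monad F = (F, m, e) to a comonad G = (G, δ, ε) on A, and g : Id → G a grouplike morphism. Define the functor F^g together with i_F : F^g → F as the equaliser, in the category of endofunctors of A, of the pair of natural transformations gF, λ ∘ Fg : F → GF. Then F^g carries a monad structure (F^g, m', e') such that i_F : F^g → F is a morphism of monads; here e' : Id → F^g is the unique morphism with i_F ∘ e' = e, and m' : F^g F^g → F^g is the unique morphism with i_F ∘ m' = m ∘ (i_F i_F). -/

import Mathlib

open CategoryTheory CategoryTheory.Limits

namespace Paper


variable {A : Type*} [Category A]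

/-- An entwining (mixed distributive law) `λ : TG ⟶ GT` from a monad `T` to a comonad `G`. -/
structure Entwining (T : Monad A) (G : Comonad A) where
  lam : (G : A ⥤ A) ⋙ (T : A ⥤ A) ⟶ (T : A ⥤ A) ⋙ (G : A ⥤ A)
  comp_mul : ∀ a : A, T.μ.app ((G : A ⥤ A).obj a) ≫ lam.app a =
      (T : A ⥤ A).map (lam.app a) ≫ lam.app ((T : A ⥤ A).obj a) ≫
        (G : A ⥤ A).map (T.μ.app a)
  comp_unit : ∀ a : A, T.η.app ((G : A ⥤ A).obj a) ≫ lam.app a = (G : A ⥤ A).map (T.η.app a)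
  delta_comp : ∀ a : A, lam.app a ≫ G.δ.app ((T : A ⥤ A).obj a) =
      (T : A ⥤ A).map (G.δ.app a) ≫ lam.app ((G : A ⥤ A).obj a) ≫
        (G : A ⥤ A).map (lam.app a)
  eps_comp : ∀ a : A, lam.app a ≫ G.ε.app ((T : A ⥤ A).obj a) = (T : A ⥤ A).map (G.ε.app a)

namespace Entwining

variable {T : Monad A} {G : Comonad A} (E : Entwining T G)

lemma lam_natural {a b : A} (f : a ⟶ b) :
    (T : A ⥤ A).map ((G : A ⥤ A).map f) ≫ E.lam.app b =
      E.lam.app a ≫ (G : A ⥤ A).map ((T : A ⥤ A).map f) :=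
  E.lam.naturality f

/-- The value of the lifted comonad `Ĝ` on an object of `A_T`:
`Ĝ(a, h) = (G(a), G(h) ∘ λ_a)`. -/
@[simps]
def liftAlgebra (X : T.Algebra) : T.Algebra where
  A := (G : A ⥤ A).obj X.A
  a := E.lam.app X.A ≫ (G : A ⥤ A).map X.a
  unit := by
    rw [← Category.assoc, E.comp_unit, ← Functor.map_comp, X.unit]
    simp
  assoc := by
    calc T.μ.app ((G : A ⥤ A).obj X.A) ≫ E.lam.app X.A ≫ (G : A ⥤ A).map X.a
        = (T.μ.app ((G : A ⥤ A).obj X.A) ≫ E.lam.app X.A) ≫ (G : A ⥤ A).map X.a := by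
          rw [Category.assoc]
      _ = (T : A ⥤ A).map (E.lam.app X.A) ≫ E.lam.app ((T : A ⥤ A).obj X.A) ≫
            (G : A ⥤ A).map (T.μ.app X.A) ≫ (G : A ⥤ A).map X.a := by
          rw [E.comp_mul]; simp [Category.assoc]
      _ = (T : A ⥤ A).map (E.lam.app X.A) ≫ E.lam.app ((T : A ⥤ A).obj X.A) ≫
            (G : A ⥤ A).map ((T : A ⥤ A).map X.a) ≫ (G : A ⥤ A).map X.a := by
          rw [← Functor.map_comp, X.assoc, Functor.map_comp]
      _ = (T : A ⥤ A).map (E.lam.app X.A) ≫ (T : A ⥤ A).map ((G : A ⥤ A).map X.a) ≫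
            E.lam.app X.A ≫ (G : A ⥤ A).map X.a := by
          rw [← Category.assoc (E.lam.app ((T : A ⥤ A).obj X.A)), ← E.lam_natural X.a]
          simp [Category.assoc]
      _ = (T : A ⥤ A).map (E.lam.app X.A ≫ (G : A ⥤ A).map X.a) ≫
            E.lam.app X.A ≫ (G : A ⥤ A).map X.a := by
          rw [Functor.map_comp, Category.assoc]

/-- The lifting `Ĝ` of the comonad `G` to the Eilenberg–Moore category `A_T`
along the entwining `λ`. -/
@[simps]
def liftedComonad : Comonad (T.Algebra) where
  obj X := E.liftAlgebra X
  map {X Y} f :=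
    { f := (G : A ⥤ A).map f.f
      h := by
        calc (T : A ⥤ A).map ((G : A ⥤ A).map f.f) ≫ E.lam.app Y.A ≫ (G : A ⥤ A).map Y.a
            = (E.lam.app X.A ≫ (G : A ⥤ A).map ((T : A ⥤ A).map f.f)) ≫
                (G : A ⥤ A).map Y.a := by
              rw [← Category.assoc, E.lam_natural f.f]
          _ = E.lam.app X.A ≫ (G : A ⥤ A).map ((T : A ⥤ A).map f.f ≫ Y.a) := by
              rw [Category.assoc, ← Functor.map_comp]
          _ = E.lam.app X.A ≫ (G : A ⥤ A).map (X.a ≫ f.f) := by rw [f.h]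
          _ = (E.lam.app X.A ≫ (G : A ⥤ A).map X.a) ≫ (G : A ⥤ A).map f.f := by
              rw [Functor.map_comp, Category.assoc] }
  map_id X := by ext; exact (G : A ⥤ A).map_id X.A
  map_comp f g := by ext; exact (G : A ⥤ A).map_comp f.f g.f
  ε :=
    { app := fun X =>
        { f := G.ε.app X.A
          h := by
            show (T : A ⥤ A).map (G.ε.app X.A) ≫ X.a =
              (E.lam.app X.A ≫ (G : A ⥤ A).map X.a) ≫ G.ε.app X.A
            have hnat : (G : A ⥤ A).map X.a ≫ G.ε.app X.A =
                G.ε.app ((T : A ⥤ A).obj X.A) ≫ X.a := by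
              simpa using (G.ε.naturality X.a).symm
            rw [Category.assoc, hnat, ← Category.assoc, E.eps_comp] }
      naturality := fun X Y f => by ext; exact G.ε.naturality f.f }
  δ :=
    { app := fun X =>
        { f := G.δ.app X.A
          h := by
            dsimp
            calc (T : A ⥤ A).map (G.δ.app X.A) ≫ E.lam.app ((G : A ⥤ A).obj X.A) ≫
                  (G : A ⥤ A).map (E.lam.app X.A ≫ (G : A ⥤ A).map X.a)
                = (T : A ⥤ A).map (G.δ.app X.A) ≫ E.lam.app ((G : A ⥤ A).obj X.A) ≫
                    (G : A ⥤ A).map (E.lam.app X.A) ≫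
                    (G : A ⥤ A).map ((G : A ⥤ A).map X.a) := by
                  rw [Functor.map_comp]
              _ = (E.lam.app X.A ≫ G.δ.app ((T : A ⥤ A).obj X.A)) ≫
                    (G : A ⥤ A).map ((G : A ⥤ A).map X.a) := by
                  rw [E.delta_comp]; simp [Category.assoc]
              _ = E.lam.app X.A ≫ (G : A ⥤ A).map X.a ≫ G.δ.app X.A := by
                  have hnat : (G : A ⥤ A).map X.a ≫ G.δ.app X.A =
                      G.δ.app ((T : A ⥤ A).obj X.A) ≫
                        (G : A ⥤ A).map ((G : A ⥤ A).map X.a) := by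
                    simpa using (G.δ.naturality X.a).symm
                  rw [hnat, Category.assoc]
              _ = (E.lam.app X.A ≫ (G : A ⥤ A).map X.a) ≫ G.δ.app X.A := by
                  rw [Category.assoc] }
      naturality := fun X Y f => by ext; exact G.δ.naturality f.f }
  coassoc X := by ext; exact G.coassoc X.A
  left_counit X := by ext; exact G.left_counit X.A
  right_counit X := by ext; exact G.right_counit X.A


/-- The value of the lifted monad `T̂` on an object of `A^G`: `T̂(a, θ) = (T(a), λ_a ∘ T(θ))`. -/
@[simps]
def liftCoalgebra (X : G.Coalgebra) : G.Coalgebra where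
  A := (T : A ⥤ A).obj X.A
  a := (T : A ⥤ A).map X.a ≫ E.lam.app X.A
  counit := by
    rw [Category.assoc, E.eps_comp, ← Functor.map_comp, X.counit]
    simp
  coassoc := by
    calc ((T : A ⥤ A).map X.a ≫ E.lam.app X.A) ≫ G.δ.app ((T : A ⥤ A).obj X.A)
        = (T : A ⥤ A).map X.a ≫ (T : A ⥤ A).map (G.δ.app X.A) ≫
            E.lam.app ((G : A ⥤ A).obj X.A) ≫ (G : A ⥤ A).map (E.lam.app X.A) := by
          rw [Category.assoc, E.delta_comp]
      _ = (T : A ⥤ A).map (X.a ≫ G.δ.app X.A) ≫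
            E.lam.app ((G : A ⥤ A).obj X.A) ≫ (G : A ⥤ A).map (E.lam.app X.A) := by
          rw [Functor.map_comp, Category.assoc]
      _ = (T : A ⥤ A).map X.a ≫ (T : A ⥤ A).map ((G : A ⥤ A).map X.a) ≫
            E.lam.app ((G : A ⥤ A).obj X.A) ≫ (G : A ⥤ A).map (E.lam.app X.A) := by
          rw [X.coassoc, Functor.map_comp, Category.assoc]
      _ = (T : A ⥤ A).map X.a ≫ E.lam.app X.A ≫
            (G : A ⥤ A).map ((T : A ⥤ A).map X.a) ≫ (G : A ⥤ A).map (E.lam.app X.A) := by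
          rw [← Category.assoc ((T : A ⥤ A).map ((G : A ⥤ A).map X.a)), E.lam_natural X.a]
          simp only [Category.assoc]
      _ = ((T : A ⥤ A).map X.a ≫ E.lam.app X.A) ≫
            (G : A ⥤ A).map ((T : A ⥤ A).map X.a ≫ E.lam.app X.A) := by
          rw [Functor.map_comp]
          simp only [Category.assoc]


/-- The lifting of the endofunctor `T` to `A^G`. -/
@[simps]
def liftFunctorT : G.Coalgebra ⥤ G.Coalgebra where
  obj X := E.liftCoalgebra X
  map {X Y} f :=
    { f := (T : A ⥤ A).map f.f
      h := by
        calc ((T : A ⥤ A).map X.a ≫ E.lam.app X.A) ≫ (G : A ⥤ A).map ((T : A ⥤ A).map f.f)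
            = (T : A ⥤ A).map X.a ≫ E.lam.app X.A ≫
                (G : A ⥤ A).map ((T : A ⥤ A).map f.f) := by rw [Category.assoc]
          _ = (T : A ⥤ A).map X.a ≫ (T : A ⥤ A).map ((G : A ⥤ A).map f.f) ≫
                E.lam.app Y.A := by rw [← E.lam_natural f.f]
          _ = (T : A ⥤ A).map (X.a ≫ (G : A ⥤ A).map f.f) ≫ E.lam.app Y.A := by
              rw [Functor.map_comp, Category.assoc]
          _ = (T : A ⥤ A).map (f.f ≫ Y.a) ≫ E.lam.app Y.A := by rw [f.h]
          _ = (T : A ⥤ A).map f.f ≫ (T : A ⥤ A).map Y.a ≫ E.lam.app Y.A := by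
              rw [Functor.map_comp, Category.assoc] }
  map_id X := by ext; exact (T : A ⥤ A).map_id X.A
  map_comp f g := by ext; exact (T : A ⥤ A).map_comp f.f g.f

/-- The unit of the lifted monad. -/
@[simps]
def liftEta : 𝟭 (G.Coalgebra) ⟶ E.liftFunctorT where
  app X :=
    { f := T.η.app X.A
      h := by
        show X.a ≫ (G : A ⥤ A).map (T.η.app X.A) =
          T.η.app X.A ≫ (T : A ⥤ A).map X.a ≫ E.lam.app X.A
        have hnat : X.a ≫ T.η.app ((G : A ⥤ A).obj X.A) =
            T.η.app X.A ≫ (T : A ⥤ A).map X.a := by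
          simpa using T.η.naturality X.a
        rw [← Category.assoc, ← hnat, Category.assoc, E.comp_unit] }
  naturality X Y f := by
    ext
    show f.f ≫ T.η.app Y.A = T.η.app X.A ≫ (T : A ⥤ A).map f.f
    simpa using T.η.naturality f.f

/-- The multiplication of the lifted monad. -/
@[simps]
def liftMu : E.liftFunctorT ⋙ E.liftFunctorT ⟶ E.liftFunctorT where
  app X :=
    { f := T.μ.app X.A
      h := by
        dsimp
        have hnat : (T : A ⥤ A).map ((T : A ⥤ A).map X.a) ≫
              T.μ.app ((G : A ⥤ A).obj X.A) = T.μ.app X.A ≫ (T : A ⥤ A).map X.a := by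
          simpa using T.μ.naturality X.a
        calc ((T : A ⥤ A).map ((T : A ⥤ A).map X.a ≫ E.lam.app X.A) ≫
                E.lam.app ((T : A ⥤ A).obj X.A)) ≫ (G : A ⥤ A).map (T.μ.app X.A)
            = (T : A ⥤ A).map ((T : A ⥤ A).map X.a) ≫
                ((T : A ⥤ A).map (E.lam.app X.A) ≫ E.lam.app ((T : A ⥤ A).obj X.A) ≫
                  (G : A ⥤ A).map (T.μ.app X.A)) := by
              rw [Functor.map_comp]
              simp only [Category.assoc]
          _ = (T : A ⥤ A).map ((T : A ⥤ A).map X.a) ≫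
                T.μ.app ((G : A ⥤ A).obj X.A) ≫ E.lam.app X.A := by
              rw [← E.comp_mul]
          _ = (T.μ.app X.A ≫ (T : A ⥤ A).map X.a) ≫ E.lam.app X.A := by
              rw [← Category.assoc, hnat]
          _ = T.μ.app X.A ≫ (T : A ⥤ A).map X.a ≫ E.lam.app X.A := by
              rw [Category.assoc] }
  naturality X Y f := by
    ext
    show (T : A ⥤ A).map ((T : A ⥤ A).map f.f) ≫ T.μ.app Y.A =
      T.μ.app X.A ≫ (T : A ⥤ A).map f.f
    simpa using T.μ.naturality f.f

/-- The lifting `T̂` of the monad `T` to the Eilenberg–Moore category `A^G`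
along the entwining `λ`. -/
def liftedMonad : Monad (G.Coalgebra) where
  toFunctor := E.liftFunctorT
  η := E.liftEta
  μ := E.liftMu
  assoc X := by ext; exact T.assoc X.A
  left_unit X := by ext; exact T.left_unit X.A
  right_unit X := by ext; exact T.right_unit X.A


end Entwining

/-- A grouplike morphism `g : Id ⟶ G` for a comonad `G`. -/
structure Grouplike {A : Type*} [Category A] (G : Comonad A) where
  g : 𝟭 A ⟶ (G : A ⥤ A)
  counit : ∀ a : A, g.app a ≫ G.ε.app a = 𝟙 a
  comul : ∀ a : A, g.app a ≫ G.δ.app a = g.app a ≫ (G : A ⥤ A).map (g.app a)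


namespace Entwining

variable {A : Type*} [Category A] {F : Monad A} {G : Comonad A}
variable (E : Entwining F G) (gl : Grouplike G)

/-- The natural transformation `gF : F ⟶ GF`. -/
def gF : (F : A ⥤ A) ⟶ (F : A ⥤ A) ⋙ (G : A ⥤ A) :=
  Functor.whiskerLeft (F : A ⥤ A) gl.g

/-- The natural transformation `g̃ = λ ∘ Fg : F ⟶ GF`. -/
def tildeg : (F : A ⥤ A) ⟶ (F : A ⥤ A) ⋙ (G : A ⥤ A) :=
  Functor.whiskerRight gl.g (F : A ⥤ A) ≫ E.lam

@[simp] lemma gF_app (a : A) : (gF (F := F) gl).app a = gl.g.app ((F : A ⥤ A).obj a) := rfl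

@[simp] lemma tildeg_app (a : A) :
    (E.tildeg gl).app a = (F : A ⥤ A).map (gl.g.app a) ≫ E.lam.app a := rfl

lemma eta_equalizes_app (a : A) :
    F.η.app a ≫ (gF (F := F) gl).app a = F.η.app a ≫ (E.tildeg gl).app a := by
  have h1 := gl.g.naturality (F.η.app a)
  have h2 := F.η.naturality (gl.g.app a)
  simp only [Functor.id_map, Functor.id_obj, Functor.comp_map] at h1 h2
  simp only [gF_app, tildeg_app]
  rw [← Category.assoc, ← h2, Category.assoc, E.comp_unit, ← h1]

lemma eta_equalizes : F.η ≫ gF (F := F) gl = F.η ≫ E.tildeg gl := by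
  ext a
  exact eta_equalizes_app E gl a

variable [HasEqualizers A]

/-- The equaliser functor `F^g` of the pair `gF`, `λ ∘ Fg`. -/
noncomputable def Fg : A ⥤ A := equalizer (gF (F := F) gl) (E.tildeg gl)

/-- The equaliser inclusion `i_F : F^g ⟶ F`. -/
noncomputable def iF : E.Fg gl ⟶ (F : A ⥤ A) := equalizer.ι _ _

/-- The horizontal composite `i_F i_F : F^g F^g ⟶ FF`. -/
noncomputable def iFiF : E.Fg gl ⋙ E.Fg gl ⟶ (F : A ⥤ A) ⋙ (F : A ⥤ A) :=
  Functor.whiskerLeft (E.Fg gl) (E.iF gl) ≫ Functor.whiskerRight (E.iF gl) (F : A ⥤ A)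

/-- The canonical natural transformation `e' : Id ⟶ F^g` with `i_F ∘ e' = e`. -/
noncomputable def unitFg : 𝟭 A ⟶ E.Fg gl :=
  equalizer.lift F.η (eta_equalizes E gl)

end Entwining


/-!
A morphism `f : x ⟶ F a` factors through `F^g a` exactly when it is coinvariant, i.e. equalised
by `g_{Fa}` and `λ_a ∘ F g_a`. The unit `e_a` is coinvariant by the entwining axiom for `e`, and
for coinvariant `h : y ⟶ F x` and `f : x ⟶ F a` the product `m_a ∘ F f ∘ h` is coinvariant by the
entwining axiom for `m`. Hence `e` and `m ∘ (i_F i_F)` factor through `i_F`, and the monad laws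
for the factorisations follow from those of `F` because every `i_F a` is a monomorphism.
-/

section

variable {C : Type*} [Category C]

def Monad.ofMono (T : Monad C) {S : C ⥤ C} (i : S ⟶ T.toFunctor) [∀ X, Mono (i.app X)]
    (η' : 𝟭 C ⟶ S) (μ' : S ⋙ S ⟶ S) (hη : ∀ X, η'.app X ≫ i.app X = T.η.app X)
    (hμ : ∀ X, μ'.app X ≫ i.app X = (i.app (S.obj X) ≫ T.map (i.app X)) ≫ T.μ.app X) :
    Monad C where
  toFunctor := S
  η := η'
  μ := μ'
  left_unit X := by
    rw [← cancel_mono (i.app X)]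
    simp [hμ, reassoc_of% hη, ← T.unit_naturality_assoc]
  right_unit X := by
    rw [← cancel_mono (i.app X)]
    simp [hμ, ← Functor.map_comp_assoc, hη]
  assoc X := by
    rw [← cancel_mono (i.app X)]
    calc (S.map (μ'.app X) ≫ μ'.app X) ≫ i.app X
        = i.app (S.obj (S.obj X)) ≫ T.map (μ'.app X) ≫ T.map (i.app X) ≫ T.μ.app X := by
          simp [hμ]
      _ = i.app (S.obj (S.obj X)) ≫ T.map (i.app (S.obj X)) ≫ T.map (T.map (i.app X)) ≫
            T.μ.app (T.obj X) ≫ T.μ.app X := by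
          rw [← T.map_comp_assoc, hμ]; simp [T.assoc]
      _ = (μ'.app (S.obj X) ≫ μ'.app X) ≫ i.app X := by
          simp [hμ, reassoc_of% hμ, T.mu_naturality_assoc]

end

namespace Entwining

variable {A : Type*} [Category A] {F : Monad A} {G : Comonad A}
variable (E : Entwining F G) (gl : Grouplike G)

def IsCoinvariant {x a : A} (f : x ⟶ (F : A ⥤ A).obj a) : Prop :=
  f ≫ gl.g.app ((F : A ⥤ A).obj a) = f ≫ (F : A ⥤ A).map (gl.g.app a) ≫ E.lam.app a

variable {E gl} in
lemma IsCoinvariant.mul {x y a : A} {h : y ⟶ (F : A ⥤ A).obj x} {f : x ⟶ (F : A ⥤ A).obj a}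
    (hh : E.IsCoinvariant gl h) (hf : E.IsCoinvariant gl f) :
    E.IsCoinvariant gl (h ≫ (F : A ⥤ A).map f ≫ F.μ.app a) := by
  have g_nat {X Y : A} (k : X ⟶ Y) : k ≫ gl.g.app Y = gl.g.app X ≫ (G : A ⥤ A).map k :=
    gl.g.naturality k
  have lam_nat : E.lam.app x ≫ (G : A ⥤ A).map ((F : A ⥤ A).map f) =
      (F : A ⥤ A).map ((G : A ⥤ A).map f) ≫ E.lam.app ((F : A ⥤ A).obj a) :=
    (E.lam_natural f).symm
  unfold IsCoinvariant at *
  calc (h ≫ (F : A ⥤ A).map f ≫ F.μ.app a) ≫ gl.g.app ((F : A ⥤ A).obj a)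
      = (h ≫ gl.g.app _) ≫ (G : A ⥤ A).map ((F : A ⥤ A).map f ≫ F.μ.app a) := by
        simp [g_nat]
    _ = h ≫ (F : A ⥤ A).map (f ≫ gl.g.app _) ≫ E.lam.app _ ≫
          (G : A ⥤ A).map (F.μ.app a) := by
        rw [hh, g_nat f]; simp [reassoc_of% lam_nat]
    _ = h ≫ (F : A ⥤ A).map f ≫ (F : A ⥤ A).map ((F : A ⥤ A).map (gl.g.app a)) ≫
          (F : A ⥤ A).map (E.lam.app a) ≫ E.lam.app _ ≫ (G : A ⥤ A).map (F.μ.app a) := by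
        rw [hf]; simp
    _ = (h ≫ (F : A ⥤ A).map f ≫ F.μ.app a) ≫ (F : A ⥤ A).map (gl.g.app a) ≫ E.lam.app a := by
        rw [← E.comp_mul]; simp [F.mu_naturality_assoc]

variable [HasEqualizers A]

instance (a : A) : Mono ((E.iF gl).app a) :=
  mono_of_isLimit_fork (isLimitOfHasEqualizerOfPreservesLimit ((evaluation A A).obj a) _ _)

lemma isCoinvariant_iF_app (a : A) : E.IsCoinvariant gl ((E.iF gl).app a) := by
  have h := NatTrans.congr_app (equalizer.condition (gF (F := F) gl) (E.tildeg gl)) a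
  simp only [NatTrans.comp_app, gF_app, tildeg_app] at h
  exact h

noncomputable def mulFg : E.Fg gl ⋙ E.Fg gl ⟶ E.Fg gl :=
  equalizer.lift (E.iFiF gl ≫ F.μ) <| by
    ext a
    simpa [IsCoinvariant, iFiF] using
      (E.isCoinvariant_iF_app gl ((E.Fg gl).obj a)).mul (E.isCoinvariant_iF_app gl a)

lemma mulFg_iF : E.mulFg gl ≫ E.iF gl = E.iFiF gl ≫ F.μ :=
  equalizer.lift_ι _ _

lemma unitFg_iF : E.unitFg gl ≫ E.iF gl = F.η :=
  equalizer.lift_ι _ _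

end Entwining

/-- **Theorem 3.4 (Equaliser monad).**  Let `A` admit equalisers, `λ : FG ⟶ GF` an
entwining from a monad `F` to a comonad `G`, and `g : Id ⟶ G` a grouplike morphism.  Let
`F^g` together with `i_F : F^g ⟶ F` be the equaliser (in endofunctors of `A`) of
`gF` and `λ ∘ Fg`.  Then `F^g` carries a monad structure `(F^g, m', e')` for which `i_F`
is a morphism of monads, where `e'` is unique with `i_F ∘ e' = e` and `m'` is unique
with `i_F ∘ m' = m ∘ (i_F i_F)`. -/
theorem statement14 {A : Type*} [Category A] [HasEqualizers A]
    (F : Monad A) (G : Comonad A) (E : Entwining F G) (gl : Grouplike G) :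
    ∃ (e' : 𝟭 A ⟶ E.Fg gl) (m' : E.Fg gl ⋙ E.Fg gl ⟶ E.Fg gl),
      e' ≫ E.iF gl = F.η ∧
      m' ≫ E.iF gl = E.iFiF gl ≫ F.μ ∧
      (∀ e'' : 𝟭 A ⟶ E.Fg gl, e'' ≫ E.iF gl = F.η → e'' = e') ∧
      (∀ m'' : E.Fg gl ⋙ E.Fg gl ⟶ E.Fg gl,
        m'' ≫ E.iF gl = E.iFiF gl ≫ F.μ → m'' = m') ∧
      (∀ a : A, e'.app ((E.Fg gl).obj a) ≫ m'.app a = 𝟙 ((E.Fg gl).obj a)) ∧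
      (∀ a : A, (E.Fg gl).map (e'.app a) ≫ m'.app a = 𝟙 ((E.Fg gl).obj a)) ∧
      (∀ a : A, (E.Fg gl).map (m'.app a) ≫ m'.app a =
        m'.app ((E.Fg gl).obj a) ≫ m'.app a) := by
  let M := Monad.ofMono F (E.iF gl) (E.unitFg gl) (E.mulFg gl)
    (NatTrans.congr_app (E.unitFg_iF gl)) (NatTrans.congr_app (E.mulFg_iF gl))
  exact ⟨E.unitFg gl, E.mulFg gl, E.unitFg_iF gl, E.mulFg_iF gl,
    fun _ h => equalizer.hom_ext (h.trans (E.unitFg_iF gl).symm),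
    fun _ h => equalizer.hom_ext (h.trans (E.mulFg_iF gl).symm),
    M.left_unit, M.right_unit, M.assoc⟩

end Paper
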